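/- Let G = (V,E) be an undirected graph, x ∈ V, and let H be the bipartite 4-layer graph with layers I, Ī, J, J̄ (each a copy of V), edges (u_I, v_J) for every (u,v) ∈ E, and edges (u_Ī, u_I), (u_J̄, u_J) for every u ∉ N(x). If x does not lie in any triangle of G, then every matching of H has size at most 2(n − |N(x)|); if x lies in a triangle of G, then every matching of H admitting no augmenting path of length at most 5 has size at least 2(n − |N(x)|) + 1. -/

import Mathlib

/-!
Let `C = (V ∖ N(x)) × {I, J}`. Every vertex of `C` has a private pendant neighbour in `Ī` or `J̄`.
If `x` lies in no triangle, every edge of `H` meets `C`, so a matching has at most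
`|C| = 2(n - |N(x)|)` edges. If `x y z` is a triangle and `M` has no augmenting path of length at
most five, the pendants force every vertex of `C` to be matched, and never to another vertex of `C`
(otherwise there is an augmenting path of length one or three), and the edge `y_I z_J` forces an
edge of `M` between `N(x) × {I}` and `N(x) × {J}` (otherwise there is one of length at most five).
The `I`-end of that edge together with `C` gives `2(n - |N(x)|) + 1` vertices, each covered by a
different edge of `M`.
-/

/-- `p` is an augmenting path for the matching (subgraph) `M` of `H`: a path of positive
length between two unmatched vertices whose edges alternate, beginning and ending with
edges not in `M` (the `i`-th edge is in `M` iff `i` is odd). -/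
def IsAugPath {W : Type*} (H : SimpleGraph W) (M : H.Subgraph) {u v : W}
    (p : H.Walk u v) : Prop :=
  p.IsPath ∧ 0 < p.length ∧ (∀ w, ¬ M.Adj u w) ∧ (∀ w, ¬ M.Adj v w) ∧
    ∀ (i : ℕ) (h : i < p.edges.length), (p.edges.get ⟨i, h⟩ ∈ M.edgeSet ↔ Odd i)

open SimpleGraph

namespace SimpleGraph.Subgraph

variable {W : Type*} {H : SimpleGraph W} {M : H.Subgraph}

lemma IsMatching.eq_of_mem_edgeSet (hM : M.IsMatching) {v : W} {e₁ e₂ : Sym2 W}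
    (he₁ : e₁ ∈ M.edgeSet) (he₂ : e₂ ∈ M.edgeSet) (hv₁ : v ∈ e₁) (hv₂ : v ∈ e₂) :
    e₁ = e₂ := by
  obtain ⟨a, rfl⟩ := Sym2.mem_iff_exists.mp hv₁
  obtain ⟨b, rfl⟩ := Sym2.mem_iff_exists.mp hv₂
  rw [hM.eq_of_adj_left (M.mem_edgeSet.mp he₁) (M.mem_edgeSet.mp he₂)]

lemma IsMatching.ncard_edgeSet_le_of_cover (hM : M.IsMatching) {C : Set W}
    (hC : ∀ ⦃u v⦄, M.Adj u v → u ∈ C ∨ v ∈ C) (hCfin : C.Finite := by toFinite_tac) :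
    M.edgeSet.ncard ≤ C.ncard := by
  have hcover : ∀ e ∈ M.edgeSet, ∃ v ∈ C, v ∈ e := by
    intro e he
    induction e using Sym2.ind with | h u v =>
    rcases hC he with hu | hv
    exacts [⟨u, hu, Sym2.mem_mk_left u v⟩, ⟨v, hv, Sym2.mem_mk_right u v⟩]
  cases isEmpty_or_nonempty W
  · have : M.edgeSet = ∅ := Set.eq_empty_of_forall_notMem fun e he =>
      isEmptyElim (hcover e he).choose
    simp [this]
  choose! f hfC hfe using hcover
  exact Set.ncard_le_ncard_of_injOn f hfC
    (fun e₁ he₁ e₂ he₂ h => hM.eq_of_mem_edgeSet he₁ he₂ (hfe e₁ he₁) (h ▸ hfe e₂ he₂)) hCfin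

lemma ncard_le_ncard_edgeSet_of_subset_support {S : Set W} (hS : S ⊆ M.support)
    (hind : ∀ v ∈ S, ∀ w ∈ S, ¬ M.Adj v w) (hfin : M.edgeSet.Finite := by toFinite_tac) :
    S.ncard ≤ M.edgeSet.ncard := by
  cases isEmpty_or_nonempty W
  · simp [Set.eq_empty_of_isEmpty S]
  have hmatched : ∀ v ∈ S, ∃ w, M.Adj v w := fun v hv => hS hv
  choose! p hp using hmatched
  refine Set.ncard_le_ncard_of_injOn (fun v => s(v, p v)) hp ?_ hfin
  intro v hv w hw h
  rcases Sym2.eq_iff.mp h with ⟨hvw, -⟩ | ⟨rfl, -⟩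
  · exact hvw
  · exact absurd (hp w hw).symm (hind _ hv w hw)

end SimpleGraph.Subgraph

section AugmentingPaths

variable {W : Type*} {H : SimpleGraph W} {M : H.Subgraph}

def HasShortAugPath (H : SimpleGraph W) (M : H.Subgraph) (k : ℕ) : Prop :=
  ∃ (u v : W) (p : H.Walk u v), IsAugPath H M p ∧ p.length ≤ k

lemma HasShortAugPath.mono {k l : ℕ} (h : HasShortAugPath H M k) (hkl : k ≤ l) :
    HasShortAugPath H M l :=
  let ⟨u, v, p, hp, hk⟩ := h
  ⟨u, v, p, hp, hk.trans hkl⟩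

lemma hasShortAugPath_one {a b : W} (hab : H.Adj a b)
    (ha : ∀ w, ¬ M.Adj a w) (hb : ∀ w, ¬ M.Adj b w) : HasShortAugPath H M 1 := by
  refine ⟨a, b, .cons hab .nil, ⟨?_, by simp, ha, hb, ?_⟩, by simp⟩
  · simp [Walk.isPath_def, hab.ne]
  · intro i hi
    simp only [Walk.edges_cons, Walk.edges_nil, List.length] at hi
    interval_cases i
    simpa using ha b

lemma hasShortAugPath_three {a b c d : W} (hab : H.Adj a b) (hbc : M.Adj b c)
    (hcd : H.Adj c d) (had : a ≠ d) (ha : ∀ w, ¬ M.Adj a w) (hd : ∀ w, ¬ M.Adj d w) :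
    HasShortAugPath H M 3 := by
  have hac : a ≠ c := fun h => ha b (h ▸ hbc.symm)
  have hbd : b ≠ d := fun h => hd c (h ▸ hbc)
  refine ⟨a, d, .cons hab (.cons (M.adj_sub hbc) (.cons hcd .nil)),
    ⟨?_, by simp, ha, hd, ?_⟩, by simp⟩
  · simp [Walk.isPath_def, hab.ne, (M.adj_sub hbc).ne, hcd.ne, hac, had, hbd]
  · intro i hi
    simp only [Walk.edges_cons, Walk.edges_nil, List.length] at hi
    have hcd' : ¬ M.Adj c d := fun h => hd c h.symm
    interval_cases i <;> norm_num [Subgraph.mem_edgeSet, ha b, hbc, hcd', Nat.odd_iff]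

lemma hasShortAugPath_five (hM : M.IsMatching) {a b c d e f : W}
    (hab : H.Adj a b) (hbc : M.Adj b c) (hcd : H.Adj c d) (hde : M.Adj d e) (hef : H.Adj e f)
    (haf : a ≠ f) (hbd : b ≠ d) (ha : ∀ w, ¬ M.Adj a w) (hf : ∀ w, ¬ M.Adj f w) :
    HasShortAugPath H M 5 := by
  have hac : a ≠ c := fun h => ha b (h ▸ hbc.symm)
  have hae : a ≠ e := fun h => ha d (h ▸ hde.symm)
  have had : a ≠ d := fun h => ha e (h ▸ hde)
  have hbf : b ≠ f := fun h => hf c (h ▸ hbc)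
  have hdf : d ≠ f := fun h => hf e (h ▸ hde)
  have hcf : c ≠ f := fun h => hf b (h ▸ hbc.symm)
  have hbe : b ≠ e := by rintro rfl; exact hcd.ne (hM.eq_of_adj_left hbc hde.symm)
  have hce : c ≠ e := by rintro rfl; exact hbd (hM.eq_of_adj_right hbc hde)
  have hcd' : ¬ M.Adj c d := hM.not_adj_left_of_ne hbd hbc.symm
  have hef' : ¬ M.Adj e f := fun h => hf e h.symm
  refine ⟨a, f, .cons hab (.cons (M.adj_sub hbc) (.cons hcd (.cons (M.adj_sub hde)
    (.cons hef .nil)))), ⟨?_, by simp, ha, hf, ?_⟩, by simp⟩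
  · simp [Walk.isPath_def, hab.ne, (M.adj_sub hbc).ne, hcd.ne, (M.adj_sub hde).ne,
      hef.ne, hac, hae, had, haf, hbd, hbe, hce, hcf, hbf, hdf]
  · intro i hi
    simp only [Walk.edges_cons, Walk.edges_nil, List.length] at hi
    interval_cases i <;> norm_num [Subgraph.mem_edgeSet, ha b, hbc, hde, hcd', hef', Nat.odd_iff]

end AugmentingPaths

section PendantNeighbors

variable {W : Type*} {H : SimpleGraph W} {M : H.Subgraph}

def HasPendantNeighbors (H : SimpleGraph W) (C : Set W) : Prop :=
  ∀ c ∈ C, ∃ c' ∉ C, H.Adj c' c ∧ ∀ q, H.Adj c' q → q = c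

lemma not_adj_of_pendant {c c' : W} (hc' : ∀ q, H.Adj c' q → q = c) (h : ¬ M.Adj c c')
    (w : W) : ¬ M.Adj c' w := by
  intro hw
  obtain rfl := hc' w (M.adj_sub hw)
  exact h hw.symm

variable {C : Set W}

lemma subset_support_of_hasPendantNeighbors (hC : HasPendantNeighbors H C)
    (hA : ¬ HasShortAugPath H M 1) : C ⊆ M.support := by
  intro c hc
  obtain ⟨c', -, hc'c, hc'⟩ := hC c hc
  by_contra hcM
  have hc_free : ∀ w, ¬ M.Adj c w := fun w hw => hcM ⟨w, hw⟩
  exact hA (hasShortAugPath_one hc'c (not_adj_of_pendant hc' (hc_free c')) hc_free)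

lemma not_adj_of_hasPendantNeighbors (hM : M.IsMatching) (hC : HasPendantNeighbors H C)
    (hA : ¬ HasShortAugPath H M 3) {c d : W} (hc : c ∈ C) (hd : d ∈ C) : ¬ M.Adj c d := by
  intro hcd
  obtain ⟨c', hc'C, hc'c, hc'⟩ := hC c hc
  obtain ⟨d', hd'C, hd'd, hd'⟩ := hC d hd
  have hc'_free :=
    not_adj_of_pendant hc' (hM.not_adj_left_of_ne (ne_of_mem_of_not_mem hd hc'C) hcd)
  have hd'_free :=
    not_adj_of_pendant hd' (hM.not_adj_left_of_ne (ne_of_mem_of_not_mem hc hd'C) hcd.symm)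
  have hc'd' : c' ≠ d' := by
    rintro rfl
    exact hcd.ne (hc' d hd'd).symm
  exact hA (hasShortAugPath_three hc'c hcd hd'd.symm hc'd' hc'_free hd'_free)

lemma exists_unmatched_pendant (hM : M.IsMatching) (hC : HasPendantNeighbors H C) {c s t : W}
    (hc : c ∈ C) (hcs : M.Adj c s) (hst : H.Adj s t) (htC : t ∉ C) :
    ∃ c', H.Adj c' c ∧ (∀ q, H.Adj c' q → q = c) ∧ c' ≠ t ∧ ∀ w, ¬ M.Adj c' w := by
  obtain ⟨c', -, hc'c, hc'⟩ := hC c hc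
  have hc's : c' ≠ s := by
    rintro rfl
    exact htC (hc' t hst ▸ hc)
  have hc't : c' ≠ t := by
    rintro rfl
    exact hcs.ne (hc' s hst.symm).symm
  exact ⟨c', hc'c, hc', hc't, not_adj_of_pendant hc' (hM.not_adj_left_of_ne hc's.symm hcs)⟩

lemma hasShortAugPath_three_of_pendant (hM : M.IsMatching) (hC : HasPendantNeighbors H C)
    {s t d : W} (hst : H.Adj s t) (hsC : s ∉ C) (hs : ∀ w, ¬ M.Adj s w) (htd : M.Adj t d)
    (hd : d ∈ C) : HasShortAugPath H M 3 := by
  obtain ⟨d', hd'd, -, hd's, hd'_free⟩ := exists_unmatched_pendant hM hC hd htd.symm hst.symm hsC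
  exact hasShortAugPath_three hst htd hd'd.symm hd's.symm hs hd'_free

lemma hasShortAugPath_five_of_pendant (hM : M.IsMatching) (hC : HasPendantNeighbors H C)
    {s t c d : W} (hst : H.Adj s t) (hsC : s ∉ C) (htC : t ∉ C) (hsc : M.Adj s c) (hc : c ∈ C)
    (htd : M.Adj t d) (hd : d ∈ C) : HasShortAugPath H M 5 := by
  obtain ⟨c', hc'c, hc', -, hc'_free⟩ := exists_unmatched_pendant hM hC hc hsc.symm hst htC
  obtain ⟨d', hd'd, -, -, hd'_free⟩ := exists_unmatched_pendant hM hC hd htd.symm hst.symm hsC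
  have hc'd' : c' ≠ d' := by
    rintro rfl
    obtain rfl := hc' d hd'd
    exact hst.ne (hM.eq_of_adj_right hsc htd)
  exact hasShortAugPath_five hM hc'c hsc.symm hst htd hd'd.symm hc'd'
    (ne_of_mem_of_not_mem hc htC) hc'_free hd'_free

/-- If not, each end of `s t` is unmatched or matched to a vertex of `C` whose pendant is
unmatched, which gives an augmenting path of length one, three or five. -/
lemma exists_adj_notMem_of_adj (hM : M.IsMatching) (hC : HasPendantNeighbors H C)
    (hA : ¬ HasShortAugPath H M 5) {s t : W} (hst : H.Adj s t) (hsC : s ∉ C) (htC : t ∉ C) :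
    ∃ q ∉ C, M.Adj s q ∨ M.Adj t q := by
  by_contra! h
  have hs_in : ∀ q, M.Adj s q → q ∈ C := fun q hq => by_contra fun hqC => (h q hqC).1 hq
  have ht_in : ∀ q, M.Adj t q → q ∈ C := fun q hq => by_contra fun hqC => (h q hqC).2 hq
  by_cases hs : ∃ c, M.Adj s c <;> by_cases ht : ∃ d, M.Adj t d
  · obtain ⟨c, hsc⟩ := hs
    obtain ⟨d, htd⟩ := ht
    exact hA (hasShortAugPath_five_of_pendant hM hC hst hsC htC hsc (hs_in c hsc) htd (ht_in d htd))
  · obtain ⟨c, hsc⟩ := hs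
    exact hA ((hasShortAugPath_three_of_pendant hM hC hst.symm htC (not_exists.mp ht) hsc
      (hs_in c hsc)).mono (by norm_num))
  · obtain ⟨d, htd⟩ := ht
    exact hA ((hasShortAugPath_three_of_pendant hM hC hst hsC (not_exists.mp hs) htd
      (ht_in d htd)).mono (by norm_num))
  · exact hA ((hasShortAugPath_one hst (not_exists.mp hs) (not_exists.mp ht)).mono (by norm_num))

end PendantNeighbors

section LayeredGraph

variable {V : Type*} (G : SimpleGraph V) (x : V)

/-- Layers `0, 1, 2, 3` are the copies `I, Ī, J, J̄` of `V`. -/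
def layeredGraph : SimpleGraph (V × Fin 4) := SimpleGraph.fromRel (fun p q =>
      (p.2 = 0 ∧ q.2 = 2 ∧ G.Adj p.1 q.1) ∨
      (p.2 = 1 ∧ q.2 = 0 ∧ p.1 = q.1 ∧ ¬ G.Adj x p.1) ∨
      (p.2 = 3 ∧ q.2 = 2 ∧ p.1 = q.1 ∧ ¬ G.Adj x p.1))

def nonNeighborVerts : Set (V × Fin 4) := (G.neighborSet x)ᶜ ×ˢ {0, 2}

variable {G x}

lemma layeredGraph_adj_zero {u : V} {q : V × Fin 4} : (layeredGraph G x).Adj (u, 0) q ↔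
    q = (u, 1) ∧ ¬ G.Adj x u ∨ ∃ v, q = (v, 2) ∧ G.Adj u v := by
  obtain ⟨v, j⟩ := q
  fin_cases j <;> grind [layeredGraph, fromRel_adj]

lemma layeredGraph_adj_one {u : V} {q : V × Fin 4} : (layeredGraph G x).Adj (u, 1) q ↔
    q = (u, 0) ∧ ¬ G.Adj x u := by
  obtain ⟨v, j⟩ := q
  fin_cases j <;> grind [layeredGraph, fromRel_adj]

lemma layeredGraph_adj_two {u : V} {q : V × Fin 4} : (layeredGraph G x).Adj (u, 2) q ↔
    q = (u, 3) ∧ ¬ G.Adj x u ∨ ∃ v, q = (v, 0) ∧ G.Adj v u := by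
  obtain ⟨v, j⟩ := q
  fin_cases j <;> grind [layeredGraph, fromRel_adj]

lemma layeredGraph_adj_three {u : V} {q : V × Fin 4} : (layeredGraph G x).Adj (u, 3) q ↔
    q = (u, 2) ∧ ¬ G.Adj x u := by
  obtain ⟨v, j⟩ := q
  fin_cases j <;> grind [layeredGraph, fromRel_adj]

lemma mem_or_mem_nonNeighborVerts_of_adj (hx : ¬ ∃ y z, G.Adj x y ∧ G.Adj y z ∧ G.Adj z x)
    {p q : V × Fin 4} (h : (layeredGraph G x).Adj p q) :
    p ∈ nonNeighborVerts G x ∨ q ∈ nonNeighborVerts G x := by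
  obtain ⟨u, i⟩ := p
  obtain ⟨v, j⟩ := q
  have htri : ∀ y z, G.Adj x y → G.Adj x z → ¬ G.Adj y z :=
    fun y z hy hz hyz => hx ⟨y, z, hy, hyz, hz.symm⟩
  fin_cases i <;> fin_cases j <;> simp [layeredGraph, nonNeighborVerts] at h ⊢ <;> grind

lemma hasPendantNeighbors_nonNeighborVerts :
    HasPendantNeighbors (layeredGraph G x) (nonNeighborVerts G x) := by
  rintro ⟨u, i⟩ ⟨hu, hi⟩
  simp only [Set.mem_insert_iff, Set.mem_singleton_iff] at hi
  rcases hi with rfl | rfl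
  · refine ⟨(u, 1), by simp [nonNeighborVerts], layeredGraph_adj_one.mpr ⟨rfl, hu⟩,
      fun q hq => (layeredGraph_adj_one.mp hq).1⟩
  · refine ⟨(u, 3), by simp [nonNeighborVerts], layeredGraph_adj_three.mpr ⟨rfl, hu⟩,
      fun q hq => (layeredGraph_adj_three.mp hq).1⟩

variable {M : (layeredGraph G x).Subgraph}

lemma exists_adj_zero_two_of_triangle (hM : M.IsMatching)
    (hA : ¬ HasShortAugPath (layeredGraph G x) M 5) {y z : V}
    (hxy : G.Adj x y) (hyz : G.Adj y z) (hzx : G.Adj z x) :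
    ∃ a b, G.Adj x a ∧ G.Adj x b ∧ M.Adj (a, 0) (b, 2) := by
  obtain ⟨q, hqC, hyq | hzq⟩ := exists_adj_notMem_of_adj hM hasPendantNeighbors_nonNeighborVerts
    hA (layeredGraph_adj_zero.mpr (.inr ⟨z, rfl, hyz⟩)) (by simp [nonNeighborVerts, hxy])
    (by simp [nonNeighborVerts, hzx.symm])
  · rcases layeredGraph_adj_zero.mp (M.adj_sub hyq) with ⟨-, hnxy⟩ | ⟨b, rfl, -⟩
    · exact absurd hxy hnxy
    · exact ⟨y, b, hxy, by simpa [nonNeighborVerts] using hqC, hyq⟩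
  · rcases layeredGraph_adj_two.mp (M.adj_sub hzq) with ⟨-, hnxz⟩ | ⟨a, rfl, -⟩
    · exact absurd hzx.symm hnxz
    · exact ⟨a, z, by simpa [nonNeighborVerts] using hqC, hzx.symm, hzq.symm⟩

variable [Fintype V] [DecidableRel G.Adj]

lemma ncard_nonNeighborVerts :
    (nonNeighborVerts G x).ncard = 2 * (Fintype.card V - G.degree x) := by
  rw [nonNeighborVerts, Set.ncard_prod, Set.ncard_pair (by decide), Set.ncard_compl,
    Nat.card_eq_fintype_card, Set.ncard_eq_toFinset_card', Set.toFinset_card,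
    G.card_neighborSet_eq_degree, mul_comm]

lemma ncard_edgeSet_le_of_not_triangle (hx : ¬ ∃ y z, G.Adj x y ∧ G.Adj y z ∧ G.Adj z x)
    (hM : M.IsMatching) : M.edgeSet.ncard ≤ 2 * (Fintype.card V - G.degree x) := by
  rw [← ncard_nonNeighborVerts]
  exact hM.ncard_edgeSet_le_of_cover fun _ _ h =>
    mem_or_mem_nonNeighborVerts_of_adj hx (M.adj_sub h)

lemma le_ncard_edgeSet_of_triangle (hM : M.IsMatching)
    (hA : ¬ HasShortAugPath (layeredGraph G x) M 5) {y z : V}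
    (hxy : G.Adj x y) (hyz : G.Adj y z) (hzx : G.Adj z x) :
    2 * (Fintype.card V - G.degree x) + 1 ≤ M.edgeSet.ncard := by
  obtain ⟨a, b, hxa, hxb, hab⟩ := exists_adj_zero_two_of_triangle hM hA hxy hyz hzx
  have hC := hasPendantNeighbors_nonNeighborVerts (G := G) (x := x)
  have haC : (a, (0 : Fin 4)) ∉ nonNeighborVerts G x := by simp [nonNeighborVerts, hxa]
  have ha_out : ∀ w ∈ nonNeighborVerts G x, ¬ M.Adj (a, 0) w := by
    rintro w hw haw
    obtain rfl := hM.eq_of_adj_left hab haw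
    simp [nonNeighborVerts, hxb] at hw
  set S := insert (a, (0 : Fin 4)) (nonNeighborVerts G x)
  have hind : ∀ v ∈ S, ∀ w ∈ S, ¬ M.Adj v w := by
    rintro v (rfl | hv) w (rfl | hw)
    · exact fun h => (M.adj_sub h).ne rfl
    · exact ha_out w hw
    · exact fun h => ha_out v hv h.symm
    · exact not_adj_of_hasPendantNeighbors hM hC (fun h => hA (h.mono (by norm_num))) hv hw
  calc 2 * (Fintype.card V - G.degree x) + 1 = S.ncard := by
        rw [Set.ncard_insert_of_notMem haC, ncard_nonNeighborVerts]
    _ ≤ M.edgeSet.ncard := by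
        refine Subgraph.ncard_le_ncard_edgeSet_of_subset_support
          (Set.insert_subset ⟨_, hab⟩ ?_) hind
        exact subset_support_of_hasPendantNeighbors hC (fun h => hA (h.mono (by norm_num)))

end LayeredGraph

theorem stmt_11 {V : Type*} [Fintype V]
    (G : SimpleGraph V) [DecidableRel G.Adj] (x : V) :
    let H : SimpleGraph (V × Fin 4) := SimpleGraph.fromRel (fun p q =>
      (p.2 = 0 ∧ q.2 = 2 ∧ G.Adj p.1 q.1) ∨
      (p.2 = 1 ∧ q.2 = 0 ∧ p.1 = q.1 ∧ ¬ G.Adj x p.1) ∨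
      (p.2 = 3 ∧ q.2 = 2 ∧ p.1 = q.1 ∧ ¬ G.Adj x p.1))
    ((¬ ∃ y z, G.Adj x y ∧ G.Adj y z ∧ G.Adj z x) →
      ∀ M : H.Subgraph, M.IsMatching →
        M.edgeSet.ncard ≤ 2 * (Fintype.card V - G.degree x)) ∧
    ((∃ y z, G.Adj x y ∧ G.Adj y z ∧ G.Adj z x) →
      ∀ M : H.Subgraph, M.IsMatching →
        (¬ ∃ (u v : V × Fin 4) (p : H.Walk u v), IsAugPath H M p ∧ p.length ≤ 5) →
        2 * (Fintype.card V - G.degree x) + 1 ≤ M.edgeSet.ncard) :=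
  ⟨fun hx _ hM => ncard_edgeSet_le_of_not_triangle (G := G) hx hM,
    fun ⟨_, _, hxy, hyz, hzx⟩ _ hM hA => le_ncard_edgeSet_of_triangle (G := G) hM hA hxy hyz hzx⟩
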